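/- arXiv:1710.09079 — 6 statements merged into one kernel-verified Lean document; each statement's English description precedes it below -/
import Mathlib

section
/- Let p : ℝ^n → ℝ be a multilinear polynomial such that p(x) ∈ [0,1] for all x ∈ {0,1}^n. Then for every x ∈ ℝ^n, |p(x)| ≤ ∏_{i=1}^n (|1 - x_i| + |x_i|). -/
open MvPolynomial Finset

lemma eval_affine_aux {n : ℕ} (p : MvPolynomial (Fin n) ℝ) (i : Fin n)
    (h : p.degreeOf i ≤ 1) (x : Fin n → ℝ) :
    MvPolynomial.eval x p = (1 - x i) * MvPolynomial.eval (Function.update x i 0) p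
      + x i * MvPolynomial.eval (Function.update x i 1) p := by
  rw [eval_eq', eval_eq', eval_eq', Finset.mul_sum, Finset.mul_sum, ← Finset.sum_add_distrib]
  refine Finset.sum_congr rfl fun m hm => ?_
  have hmi : m i ≤ 1 := le_trans (MvPolynomial.monomial_le_degreeOf i hm) h
  have hR : ∀ c : ℝ, ∏ j ∈ ({i}ᶜ : Finset (Fin n)), (Function.update x i c) j ^ m j
      = ∏ j ∈ ({i}ᶜ : Finset (Fin n)), x j ^ m j := by
    intro c
    refine Finset.prod_congr rfl fun j hj => ?_
    rw [Function.update_of_ne (Finset.notMem_singleton.mp (Finset.mem_compl.mp hj))]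
  rw [Fintype.prod_eq_mul_prod_compl i, Fintype.prod_eq_mul_prod_compl i,
    Fintype.prod_eq_mul_prod_compl i, hR 0, hR 1, Function.update_self, Function.update_self]
  interval_cases h : m i
  · simp; ring
  · simp; ring

theorem multilinear_growth_bound (n : ℕ) (p : MvPolynomial (Fin n) ℝ)
    (hml : ∀ i, p.degreeOf i ≤ 1)
    (hbdd : ∀ x : Fin n → ℝ, (∀ i, x i = 0 ∨ x i = 1) →
      MvPolynomial.eval x p ∈ Set.Icc (0 : ℝ) 1) :
    ∀ x : Fin n → ℝ, |MvPolynomial.eval x p| ≤ ∏ i, (|1 - x i| + |x i|) := by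
  have key : ∀ S : Finset (Fin n), ∀ x : Fin n → ℝ, (∀ i, i ∉ S → x i = 0 ∨ x i = 1) →
      |MvPolynomial.eval x p| ≤ ∏ i ∈ S, (|1 - x i| + |x i|) := by
    intro S
    induction S using Finset.induction_on with
    | empty =>
      intro x hx
      simp only [Finset.prod_empty]
      have h := hbdd x (fun i => hx i (Finset.notMem_empty i))
      rw [abs_le]
      exact ⟨by linarith [h.1], h.2⟩
    | @insert a S ha ih =>
      intro x hx
      have h0 := ih (Function.update x a 0) (fun i hi => by
        rcases eq_or_ne i a with rfl | hne
        · left; simp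
        · rw [Function.update_of_ne hne]
          exact hx i (by simp [Finset.mem_insert, hne, hi]))
      have h1 := ih (Function.update x a 1) (fun i hi => by
        rcases eq_or_ne i a with rfl | hne
        · right; simp
        · rw [Function.update_of_ne hne]
          exact hx i (by simp [Finset.mem_insert, hne, hi]))
      have hP0 : ∏ i ∈ S, (|1 - Function.update x a 0 i| + |Function.update x a 0 i|)
          = ∏ i ∈ S, (|1 - x i| + |x i|) :=
        Finset.prod_congr rfl fun i hi => by
          rw [Function.update_of_ne (show i ≠ a from fun h => ha (h ▸ hi))]
      have hP1 : ∏ i ∈ S, (|1 - Function.update x a 1 i| + |Function.update x a 1 i|)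
          = ∏ i ∈ S, (|1 - x i| + |x i|) :=
        Finset.prod_congr rfl fun i hi => by
          rw [Function.update_of_ne (show i ≠ a from fun h => ha (h ▸ hi))]
      rw [hP0] at h0
      rw [hP1] at h1
      rw [Finset.prod_insert ha, eval_affine_aux p a (hml a) x]
      calc |(1 - x a) * MvPolynomial.eval (Function.update x a 0) p
            + x a * MvPolynomial.eval (Function.update x a 1) p|
          ≤ |1 - x a| * |MvPolynomial.eval (Function.update x a 0) p|
            + |x a| * |MvPolynomial.eval (Function.update x a 1) p| := by
            refine (abs_add_le _ _).trans ?_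
            rw [abs_mul, abs_mul]
        _ ≤ |1 - x a| * ∏ i ∈ S, (|1 - x i| + |x i|)
            + |x a| * ∏ i ∈ S, (|1 - x i| + |x i|) := by
            gcongr
        _ = (|1 - x a| + |x a|) * ∏ i ∈ S, (|1 - x i| + |x i|) := by ring
  intro x
  simpa using key Finset.univ x (fun i hi => absurd (Finset.mem_univ i) hi)
end

section
/- Let p : {0,1}^n → [0,1] be a multilinear polynomial, z ∈ [0,1]^n, y ∈ {0,1}^n, and suppose |y_i - z_i| ≤ δ for all i. Then |p(y) - p(z)| ≤ δ·n. -/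
open MvPolynomial

lemma eval_update_affine {n : ℕ} (p : MvPolynomial (Fin n) ℝ) (i : Fin n)
    (hi : p.degreeOf i ≤ 1) (x : Fin n → ℝ) (t : ℝ) :
    MvPolynomial.eval (Function.update x i t) p
      = (1 - t) * MvPolynomial.eval (Function.update x i 0) p
        + t * MvPolynomial.eval (Function.update x i 1) p := by
  classical
  rw [MvPolynomial.eval_eq', MvPolynomial.eval_eq', MvPolynomial.eval_eq',
    Finset.mul_sum, Finset.mul_sum, ← Finset.sum_add_distrib]
  refine Finset.sum_congr rfl fun d hd => ?_
  have hdi : d i ≤ 1 := by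
    have h1 : d i ≤ p.degreeOf i := by
      rw [MvPolynomial.degreeOf_eq_sup]; exact Finset.le_sup (f := fun m => m i) hd
    exact h1.trans hi
  have hprod : ∀ s : ℝ, (∏ j, Function.update x i s j ^ d j)
      = s ^ d i * ∏ j ∈ Finset.univ.erase i, x j ^ d j := by
    intro s
    rw [← Finset.mul_prod_erase Finset.univ _ (Finset.mem_univ i)]
    congr 1
    · simp
    · exact Finset.prod_congr rfl fun j hj => by
        rw [Function.update_of_ne (Finset.ne_of_mem_erase hj)]
  rw [hprod, hprod, hprod]
  rcases Nat.le_one_iff_eq_zero_or_eq_one.mp hdi with h | h <;> rw [h] <;> simp <;> ring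

lemma eval_mem_Icc {n : ℕ} (p : MvPolynomial (Fin n) ℝ)
    (hml : ∀ i, p.degreeOf i ≤ 1)
    (hbdd : ∀ x : Fin n → ℝ, (∀ i, x i = 0 ∨ x i = 1) →
      MvPolynomial.eval x p ∈ Set.Icc (0 : ℝ) 1)
    (x : Fin n → ℝ) (hx : ∀ i, x i ∈ Set.Icc (0 : ℝ) 1) :
    MvPolynomial.eval x p ∈ Set.Icc (0 : ℝ) 1 := by
  classical
  suffices H : ∀ k : ℕ, ∀ x : Fin n → ℝ,
      (∀ i : Fin n, (i : ℕ) < k → x i ∈ Set.Icc (0 : ℝ) 1) →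
      (∀ i : Fin n, k ≤ (i : ℕ) → x i = 0 ∨ x i = 1) →
      MvPolynomial.eval x p ∈ Set.Icc (0 : ℝ) 1 by
    exact H n x (fun i _ => hx i) (fun i h => absurd i.isLt (not_lt.2 h))
  intro k
  induction k with
  | zero => intro x _ h1; exact hbdd x (fun i => h1 i (Nat.zero_le _))
  | succ k ih =>
    intro x h0 h1
    by_cases hk : k < n
    · set i : Fin n := ⟨k, hk⟩ with hidef
      have hxi : x i ∈ Set.Icc (0 : ℝ) 1 := h0 i (Nat.lt_succ_self k)
      have key := eval_update_affine p i (hml i) x (x i)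
      rw [Function.update_eq_self] at key
      rw [key]
      have hupd : ∀ c : ℝ, (c = 0 ∨ c = 1) →
          MvPolynomial.eval (Function.update x i c) p ∈ Set.Icc (0 : ℝ) 1 := by
        intro c hc
        apply ih
        · intro j hj
          have hji : j ≠ i := by
            intro h; rw [h] at hj; simp [hidef] at hj
          rw [Function.update_of_ne hji]
          exact h0 j (hj.trans (Nat.lt_succ_self k))
        · intro j hj
          by_cases hji : j = i
          · rw [hji, Function.update_self]; exact hc
          · rw [Function.update_of_ne hji]
            apply h1 j
            have : (j : ℕ) ≠ k := fun h => hji (Fin.ext h)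
            omega
      have hA := hupd 0 (Or.inl rfl)
      have hB := hupd 1 (Or.inr rfl)
      constructor
      · nlinarith [hA.1, hA.2, hB.1, hB.2, hxi.1, hxi.2]
      · nlinarith [hA.1, hA.2, hB.1, hB.2, hxi.1, hxi.2]
    · refine ih x (fun j hj => h0 j (hj.trans (Nat.lt_succ_self k))) (fun j hj => ?_)
      exact absurd (j.isLt.trans_le (le_of_not_gt hk)) (not_lt.2 hj)

theorem robustness_of_multilinear (n : ℕ) (p : MvPolynomial (Fin n) ℝ)
    (hml : ∀ i, p.degreeOf i ≤ 1)
    (hbdd : ∀ x : Fin n → ℝ, (∀ i, x i = 0 ∨ x i = 1) →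
      MvPolynomial.eval x p ∈ Set.Icc (0 : ℝ) 1)
    (δ : ℝ) (y z : Fin n → ℝ)
    (hy : ∀ i, y i = 0 ∨ y i = 1) (hz : ∀ i, z i ∈ Set.Icc (0 : ℝ) 1)
    (hδ : ∀ i, |y i - z i| ≤ δ) :
    |MvPolynomial.eval y p - MvPolynomial.eval z p| ≤ δ * n := by
  classical
  set w : ℕ → Fin n → ℝ := fun k j => if (j : ℕ) < k then z j else y j with hw
  set f : ℕ → ℝ := fun k => MvPolynomial.eval (w k) p with hf
  have hf0 : f 0 = MvPolynomial.eval y p := by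
    simp [hf, hw]
  have hfn : f n = MvPolynomial.eval z p := by
    have hwn : w n = z := by funext j; simp [hw, j.isLt]
    show MvPolynomial.eval (w n) p = MvPolynomial.eval z p
    rw [hwn]
  have hstep : ∀ k, k < n → |f (k + 1) - f k| ≤ δ := by
    intro k hk
    set i : Fin n := ⟨k, hk⟩ with hidef
    set x : Fin n → ℝ := w k with hx
    have hwk1 : w (k + 1) = Function.update x i (z i) := by
      funext j
      by_cases hji : j = i
      · subst hji; simp [hx, hw, hidef]
      · have : (j : ℕ) ≠ k := fun h => hji (Fin.ext h)
        rw [Function.update_of_ne hji]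
        simp only [hx, hw]
        by_cases h' : (j : ℕ) < k
        · simp [h', Nat.lt_succ_of_lt h']
        · have : ¬ (j : ℕ) < k + 1 := by omega
          simp [h', this]
    have hwk : w k = Function.update x i (y i) := by
      funext j
      by_cases hji : j = i
      · subst hji; simp [hx, hw, hidef]
      · rw [Function.update_of_ne hji]
    have e1 := eval_update_affine p i (hml i) x (z i)
    have e2 := eval_update_affine p i (hml i) x (y i)
    have hxIcc : ∀ c : ℝ, (c = 0 ∨ c = 1) →
        ∀ j, Function.update x i c j ∈ Set.Icc (0 : ℝ) 1 := by
      intro c hc j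
      by_cases hji : j = i
      · rw [hji, Function.update_self]
        rcases hc with h | h <;> simp [h]
      · rw [Function.update_of_ne hji]
        simp only [hx, hw]
        by_cases h' : (j : ℕ) < k
        · simp only [h', if_true]; exact hz j
        · simp only [h', if_false]
          rcases hy j with h | h <;> simp [h]
    have hA := eval_mem_Icc p hml hbdd _ (hxIcc 0 (Or.inl rfl))
    have hB := eval_mem_Icc p hml hbdd _ (hxIcc 1 (Or.inr rfl))
    have hdiff : f (k + 1) - f k
        = (z i - y i) * (MvPolynomial.eval (Function.update x i 1) p
            - MvPolynomial.eval (Function.update x i 0) p) := by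
      simp only [hf, hwk1, hwk, e1, e2]; ring
    rw [hdiff, abs_mul]
    have h1 : |z i - y i| ≤ δ := by rw [abs_sub_comm]; exact hδ i
    have h2 : |MvPolynomial.eval (Function.update x i 1) p
        - MvPolynomial.eval (Function.update x i 0) p| ≤ 1 := by
      rw [abs_le]
      constructor <;> [nlinarith [hA.1, hA.2, hB.1, hB.2]; nlinarith [hA.1, hA.2, hB.1, hB.2]]
    calc |z i - y i| * |_| ≤ δ * 1 := by
          apply mul_le_mul h1 h2 (abs_nonneg _) ((abs_nonneg _).trans h1)
      _ = δ := mul_one δ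
  have htel : f n - f 0 = ∑ k ∈ Finset.range n, (f (k + 1) - f k) :=
    (Finset.sum_range_sub f n).symm
  have : |MvPolynomial.eval z p - MvPolynomial.eval y p| ≤ δ * n := by
    rw [← hf0, ← hfn, htel]
    calc |∑ k ∈ Finset.range n, (f (k + 1) - f k)|
        ≤ ∑ k ∈ Finset.range n, |f (k + 1) - f k| := Finset.abs_sum_le_sum_abs _ _
      _ ≤ ∑ k ∈ Finset.range n, δ :=
          Finset.sum_le_sum fun k hk => hstep k (Finset.mem_range.mp hk)
      _ = δ * n := by simp [mul_comm]
  rw [abs_sub_comm]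
  exact this
end

section
/- Let N ≥ R+1 ≥ 2 and let p = (p_1, ..., p_{R+1}) be a probability distribution on [R+1] with at least R nonzero entries, each entry being an integer multiple of 1/N. Then the statistical distance between p and the uniform distribution on [R+1], namely (1/2)∑_{i=1}^{R+1} |p_i - 1/(R+1)|, is at most 1 - R/N. -/
/-!
Since `|a - b| = a + b - 2 min a b`, the statistical distance between two probability vectors
equals `1 - ∑ i, min (p i) (q i)`, the mass they share. Every nonzero entry of `p` is at least
`1/N`, and so is `1/(R+1)` because `R + 1 ≤ N`; hence each of the at least `R` indices in the
support of `p` contributes at least `1/N` to the shared mass.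
-/

open Finset

theorem abs_sub_eq_add_sub_two_nsmul_min {α : Type*} [AddCommGroup α] [LinearOrder α]
    [IsOrderedAddMonoid α] (a b : α) : |a - b| = a + b - 2 • min a b := by
  rw [← max_sub_min_eq_abs', ← min_add_max a b, two_nsmul]
  abel

theorem half_sum_abs_sub_eq_one_sub_sum_min {ι : Type*} [Fintype ι] (p q : ι → ℝ)
    (hp : ∑ i, p i = 1) (hq : ∑ i, q i = 1) :
    (1 / 2) * ∑ i, |p i - q i| = 1 - ∑ i, min (p i) (q i) := by
  simp_rw [abs_sub_eq_add_sub_two_nsmul_min, two_nsmul]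
  rw [sum_sub_distrib, sum_add_distrib, sum_add_distrib, hp, hq]
  ring

theorem card_mul_le_sum_min {ι : Type*} [Fintype ι] (p q : ι → ℝ) (s : Finset ι) (a : ℝ)
    (hp : ∀ i, 0 ≤ p i) (hq : ∀ i, 0 ≤ q i) (hpa : ∀ i ∈ s, a ≤ p i) (hqa : ∀ i ∈ s, a ≤ q i) :
    #s * a ≤ ∑ i, min (p i) (q i) :=
  calc (#s : ℝ) * a = #s • a := (nsmul_eq_mul _ _).symm
    _ ≤ ∑ i ∈ s, min (p i) (q i) := card_nsmul_le_sum _ _ _ fun i hi => le_min (hpa i hi) (hqa i hi)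
    _ ≤ ∑ i, min (p i) (q i) :=
      sum_le_sum_of_subset_of_nonneg (subset_univ s) fun i _ _ => le_min (hp i) (hq i)

theorem one_div_le_natCast_div_of_ne_zero {N k : ℕ} (hk : (k : ℝ) / N ≠ 0) :
    1 / (N : ℝ) ≤ k / N := by
  have hk1 : 1 ≤ k := Nat.one_le_iff_ne_zero.mpr fun h => hk (by simp [h])
  gcongr
  exact_mod_cast hk1

theorem sdu_full_support_upper_general (N R : ℕ) (hN : R + 1 ≤ N)
    (p : Fin (R + 1) → ℝ) (hpos : ∀ i, 0 ≤ p i) (hsum : ∑ i, p i = 1)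
    (hmult : ∀ i, ∃ k : ℕ, p i = (k : ℝ) / N)
    (hsupp : R ≤ (Finset.univ.filter fun i => p i ≠ 0).card) :
    (1 / 2) * ∑ i, |p i - 1 / (R + 1)| ≤ 1 - (R : ℝ) / N := by
  have hunif : ∑ _i : Fin (R + 1), (1 / (R + 1) : ℝ) = 1 := by
    simp only [sum_const, card_univ, Fintype.card_fin, nsmul_eq_mul]
    push_cast
    field_simp
  have hunif_ge : 1 / (N : ℝ) ≤ 1 / (R + 1) := by
    gcongr
    exact_mod_cast hN
  have hp_ge : ∀ i ∈ univ.filter fun i => p i ≠ 0, 1 / (N : ℝ) ≤ p i := by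
    intro i hi
    replace hi := (mem_filter.mp hi).2
    obtain ⟨k, hk⟩ := hmult i
    rw [hk] at hi ⊢
    exact one_div_le_natCast_div_of_ne_zero hi
  have hshared : (R : ℝ) / N ≤ ∑ i, min (p i) (1 / (R + 1)) :=
    calc (R : ℝ) / N = R * (1 / N) := div_eq_mul_one_div _ _
      _ ≤ #(univ.filter fun i => p i ≠ 0) * (1 / N) := by gcongr
      _ ≤ ∑ i, min (p i) (1 / (R + 1)) :=
        card_mul_le_sum_min p (fun _ => 1 / (R + 1)) _ _ hpos (fun _ => by positivity) hp_ge
          fun _ _ => hunif_ge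
  rw [half_sum_abs_sub_eq_one_sub_sum_min p _ hsum hunif]
  linarith

theorem sdu_full_support_upper (N R : ℕ) (hR : 1 ≤ R) (hN : R + 1 ≤ N)
    (p : Fin (R + 1) → ℝ) (hpos : ∀ i, 0 ≤ p i) (hsum : ∑ i, p i = 1)
    (hmult : ∀ i, ∃ k : ℕ, p i = (k : ℝ) / N)
    (hsupp : R ≤ (Finset.univ.filter fun i => p i ≠ 0).card) :
    (1 / 2) * ∑ i, |p i - 1 / (R + 1)| ≤ 1 - (R : ℝ) / N :=
  sdu_full_support_upper_general N R hN p hpos hsum hmult hsupp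
end

section
/- Let Ψ : {-1,1}^M → ℝ and ψ : {-1,1}^m → ℝ with ∑_{x∈{-1,1}^M} |Ψ(x)| = 1, ∑_{y∈{-1,1}^m} |ψ(y)| = 1, and ∑_{y∈{-1,1}^m} ψ(y) = 0. Define the dual block composition (Ψ ⋆ ψ)(x_1,...,x_M) = 2^M · Ψ(sign(ψ(x_1)), ..., sign(ψ(x_M))) · ∏_{i=1}^M |ψ(x_i)|, where sign(0) is fixed to be +1. Then ∑_{(x_1,...,x_M)} |(Ψ ⋆ ψ)(x_1,...,x_M)| = 1. -/
theorem dual_block_composition_norm (M m : ℕ)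
    (Ψ : (Fin M → ℝ) → ℝ) (ψ : (Fin m → ℝ) → ℝ)
    (hΨ : ∑ z ∈ Fintype.piFinset (fun _ : Fin M => ({-1, 1} : Finset ℝ)), |Ψ z| = 1)
    (hψ : ∑ y ∈ Fintype.piFinset (fun _ : Fin m => ({-1, 1} : Finset ℝ)), |ψ y| = 1)
    (hbal : ∑ y ∈ Fintype.piFinset (fun _ : Fin m => ({-1, 1} : Finset ℝ)), ψ y = 0) :
    ∑ x ∈ Fintype.piFinset
        (fun _ : Fin M => Fintype.piFinset (fun _ : Fin m => ({-1, 1} : Finset ℝ))),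
      abs ((2 : ℝ) ^ M * Ψ (fun i => if 0 ≤ ψ (x i) then 1 else -1) * ∏ i, |ψ (x i)|)
      = 1 := by
  classical
  set S := Fintype.piFinset (fun _ : Fin m => ({-1, 1} : Finset ℝ)) with hS
  set T := Fintype.piFinset (fun _ : Fin M => ({-1, 1} : Finset ℝ)) with hT
  set s : (Fin m → ℝ) → ℝ := fun y => if 0 ≤ ψ y then 1 else -1 with hs
  -- the two halves
  have hsplit : (∑ y ∈ S, (if s y = 1 then |ψ y| else 0))
      + (∑ y ∈ S, (if s y = -1 then |ψ y| else 0)) = 1 := by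
    have h1 : (∑ y ∈ S, (if s y = 1 then |ψ y| else 0))
        + (∑ y ∈ S, (if s y = -1 then |ψ y| else 0)) = ∑ y ∈ S, |ψ y| := by
      rw [← Finset.sum_add_distrib]
      apply Finset.sum_congr rfl
      intro y _
      by_cases h : 0 ≤ ψ y
      · have hsy : s y = 1 := if_pos h
        rw [hsy]; norm_num
      · have hsy : s y = -1 := if_neg h
        rw [hsy]; norm_num
    rw [h1, hψ]
  have hdiff : (∑ y ∈ S, (if s y = 1 then |ψ y| else 0))
      - (∑ y ∈ S, (if s y = -1 then |ψ y| else 0)) = 0 := by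
    have h1 : (∑ y ∈ S, (if s y = 1 then |ψ y| else 0))
        - (∑ y ∈ S, (if s y = -1 then |ψ y| else 0)) = ∑ y ∈ S, ψ y := by
      rw [← Finset.sum_sub_distrib]
      apply Finset.sum_congr rfl
      intro y _
      by_cases h : 0 ≤ ψ y
      · have hsy : s y = 1 := if_pos h
        rw [hsy]; norm_num [abs_of_nonneg h]
      · have hsy : s y = -1 := if_neg h
        rw [hsy]; norm_num [abs_of_neg (lt_of_not_ge h)]
    rw [h1, hbal]
  have hpos : ∑ y ∈ S, (if s y = 1 then |ψ y| else 0) = 1 / 2 := by linarith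
  have hneg : ∑ y ∈ S, (if s y = -1 then |ψ y| else 0) = 1 / 2 := by linarith
  have hhalf : ∀ c : ℝ, c ∈ ({-1, 1} : Finset ℝ) →
      ∑ y ∈ S, (if s y = c then |ψ y| else 0) = 1 / 2 := by
    intro c hc
    simp only [Finset.mem_insert, Finset.mem_singleton] at hc
    rcases hc with rfl | rfl
    · exact hneg
    · exact hpos
  have hmem : ∀ x : Fin M → Fin m → ℝ, (fun i => s (x i)) ∈ T := by
    intro x
    rw [hT, Fintype.mem_piFinset]
    intro i
    by_cases h : 0 ≤ ψ (x i)
    · have : s (x i) = 1 := if_pos h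
      rw [this]; simp
    · have : s (x i) = -1 := if_neg h
      rw [this]; simp
  have key : ∀ z : Fin M → ℝ, z ∈ T →
      ∑ x ∈ Fintype.piFinset (fun _ : Fin M => S),
        (if z = (fun i => s (x i)) then ∏ i, |ψ (x i)| else 0) = (1 / 2 : ℝ) ^ M := by
    intro z hz
    have hrw : ∀ x : Fin M → Fin m → ℝ,
        (if z = (fun i => s (x i)) then ∏ i, |ψ (x i)| else 0)
        = ∏ i, (if s (x i) = z i then |ψ (x i)| else 0) := by
      intro x
      by_cases h : z = fun i => s (x i)
      · rw [if_pos h]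
        exact Finset.prod_congr rfl fun i _ => (if_pos (congrFun h i).symm).symm
      · rw [if_neg h]
        have hex : ∃ i, z i ≠ s (x i) := by
          by_contra hc
          push_neg at hc
          exact h (funext hc)
        obtain ⟨i, hi⟩ := hex
        exact (Finset.prod_eq_zero (Finset.mem_univ i)
          (show (if s (x i) = z i then |ψ (x i)| else 0) = 0 from
            if_neg fun hh => hi hh.symm)).symm
    simp only [hrw]
    calc ∑ x ∈ Fintype.piFinset (fun _ : Fin M => S),
          ∏ i, (if s (x i) = z i then |ψ (x i)| else 0)
        = ∏ i : Fin M, ∑ y ∈ S, (if s y = z i then |ψ y| else 0) :=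
          (Finset.prod_univ_sum (fun _ : Fin M => S)
            (fun i y => if s y = z i then |ψ y| else 0)).symm
      _ = ∏ _i : Fin M, (1 / 2 : ℝ) := by
          apply Finset.prod_congr rfl
          intro i _
          exact hhalf (z i) (by rw [hT, Fintype.mem_piFinset] at hz; exact hz i)
      _ = (1 / 2 : ℝ) ^ M := by simp
  calc ∑ x ∈ Fintype.piFinset (fun _ : Fin M => S),
        abs ((2 : ℝ) ^ M * Ψ (fun i => if 0 ≤ ψ (x i) then 1 else -1) * ∏ i, |ψ (x i)|)
      = ∑ x ∈ Fintype.piFinset (fun _ : Fin M => S),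
        (2 : ℝ) ^ M * (|Ψ (fun i => s (x i))| * ∏ i, |ψ (x i)|) := by
        apply Finset.sum_congr rfl
        intro x _
        have e : (fun i => if 0 ≤ ψ (x i) then (1 : ℝ) else -1) = fun i => s (x i) := rfl
        rw [e, abs_mul, abs_mul, abs_pow, abs_two,
          abs_of_nonneg (Finset.prod_nonneg fun i _ => abs_nonneg (ψ (x i)))]
        ring
    _ = (2 : ℝ) ^ M * ∑ x ∈ Fintype.piFinset (fun _ : Fin M => S),
          |Ψ (fun i => s (x i))| * ∏ i, |ψ (x i)| := by rw [Finset.mul_sum]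
    _ = (2 : ℝ) ^ M * ∑ x ∈ Fintype.piFinset (fun _ : Fin M => S),
          ∑ z ∈ T, (if z = (fun i => s (x i)) then |Ψ z| else 0) * ∏ i, |ψ (x i)| := by
        congr 1
        apply Finset.sum_congr rfl
        intro x _
        rw [← Finset.sum_mul]
        congr 1
        rw [Finset.sum_ite_eq' T (fun i => s (x i)) (fun z => |Ψ z|), if_pos (hmem x)]
    _ = (2 : ℝ) ^ M * ∑ z ∈ T, |Ψ z| *
          ∑ x ∈ Fintype.piFinset (fun _ : Fin M => S),
            (if z = (fun i => s (x i)) then ∏ i, |ψ (x i)| else 0) := by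
        rw [Finset.sum_comm]
        congr 1
        apply Finset.sum_congr rfl
        intro z _
        rw [Finset.mul_sum]
        apply Finset.sum_congr rfl
        intro x _
        by_cases h : z = fun i => s (x i) <;> simp [h]
    _ = (2 : ℝ) ^ M * ∑ z ∈ T, |Ψ z| * (1 / 2 : ℝ) ^ M := by
        congr 1
        exact Finset.sum_congr rfl fun z hz => by rw [key z hz]
    _ = 1 := by
        rw [← Finset.sum_mul, hΨ, one_mul, ← mul_pow]
        norm_num
end

section
/- Let Ψ : {-1,1}^M → ℝ be orthogonal to all polynomials of degree less than D, and let ψ : {-1,1}^m → ℝ be orthogonal to all polynomials of degree less than d (with d ≥ 1, so in particular ∑_y ψ(y) = 0). Then the dual block composition Ψ ⋆ ψ : ({-1,1}^m)^M → ℝ is orthogonal to every polynomial q : ({-1,1}^m)^M → ℝ of degree less than D·d. -/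
/-!
It suffices to test against monomials `∏_{i,j} x_{ij}^{α_{ij}}`. Expanding
`2^M Ψ(s) = ∑_w Ψ(w) ∏_i (1 + w_i s_i)` with `s_i = sign ψ(x_i)`, the sum over the blocks `x_i`
factorises and, as `sign t · |t| = t`, block `i` contributes `A_i + w_i B_i` with
`B_i = ∑_y ψ(y) y^{α_i}`. Now `B_i = 0` unless `deg α_i ≥ d`, so when `deg α < D d` fewer than `D`
of the `B_i` are nonzero; then `∏_i (A_i + w_i B_i)` has degree `< D` in `w` and is killed by `Ψ`.
-/

open Finset MvPolynomial

noncomputable abbrev boolCube (ι : Type*) [Fintype ι] [DecidableEq ι] : Finset (ι → ℝ) :=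
  Fintype.piFinset fun _ => {-1, 1}

-- Unlike `Real.sign`, this sends `0` to `1`, so that it always lands in the cube.
noncomputable def pmSign (t : ℝ) : ℝ := if 0 ≤ t then 1 else -1

lemma pmSign_mem (t : ℝ) : pmSign t ∈ ({-1, 1} : Finset ℝ) := by
  unfold pmSign; split_ifs <;> simp

lemma pmSign_mul_abs (t : ℝ) : pmSign t * |t| = t := by
  unfold pmSign
  split_ifs with h
  · rw [one_mul, abs_of_nonneg h]
  · rw [abs_of_neg (not_le.mp h), neg_one_mul, neg_neg]

section BoolCube

variable {ι : Type*} [Fintype ι] [DecidableEq ι]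

lemma prod_one_add_mul_eq_ite {w s : ι → ℝ} (hw : w ∈ boolCube ι) (hs : s ∈ boolCube ι) :
    ∏ i, (1 + w i * s i) = if w = s then 2 ^ Fintype.card ι else 0 := by
  rw [Fintype.mem_piFinset] at hw hs
  split_ifs with h
  · subst h
    calc ∏ i, (1 + w i * w i) = ∏ _i : ι, (2 : ℝ) :=
          prod_congr rfl fun i _ => by
            rcases (by simpa using hw i : w i = -1 ∨ w i = 1) with h | h <;> norm_num [h]
      _ = 2 ^ Fintype.card ι := by rw [prod_const, card_univ]
  · obtain ⟨i, hi⟩ := Function.ne_iff.mp h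
    refine prod_eq_zero (mem_univ i) ?_
    rcases (by simpa using hw i : w i = -1 ∨ w i = 1) with h | h <;>
      rcases (by simpa using hs i : s i = -1 ∨ s i = 1) with h' | h' <;> simp_all

theorem two_pow_card_mul_eq_sum (Ψ : (ι → ℝ) → ℝ) {s : ι → ℝ} (hs : s ∈ boolCube ι) :
    2 ^ Fintype.card ι * Ψ s = ∑ w ∈ boolCube ι, Ψ w * ∏ i, (1 + w i * s i) := by
  rw [sum_congr rfl fun w hw => congrArg (Ψ w * ·) (prod_one_add_mul_eq_ite hw hs)]
  simp_rw [mul_ite, mul_zero]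
  rw [sum_ite_eq' _ s, if_pos hs, mul_comm]

end BoolCube

lemma card_filter_le_lt_of_sum_lt_mul {ι : Type*} [Fintype ι] {n : ι → ℕ} {D d : ℕ}
    (h : ∑ i, n i < D * d) : #{i | d ≤ n i} < D := by
  refine Nat.lt_of_mul_lt_mul_right (a := d) ?_
  calc #{i | d ≤ n i} * d ≤ ∑ i ∈ {i | d ≤ n i}, n i := by
        simpa using card_nsmul_le_sum _ n d fun i hi => (mem_filter.mp hi).2
    _ ≤ ∑ i, n i := sum_le_sum_of_subset (subset_univ _)
    _ < D * d := h

section Orthogonality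

variable {κ σ : Type*} [Fintype σ]

theorem sum_mul_eval_eq_zero_iff_monomial (S : Finset κ) (f : κ → ℝ) (p : κ → σ → ℝ) (K : ℕ) :
    (∀ q : MvPolynomial σ ℝ, q.totalDegree < K → ∑ x ∈ S, f x * eval (p x) q = 0) ↔
      ∀ α : σ → ℕ, ∑ i, α i < K → ∑ x ∈ S, f x * ∏ i, p x i ^ α i = 0 := by
  constructor
  · intro h α hα
    have hdeg : (∏ i, X i ^ α i : MvPolynomial σ ℝ).totalDegree < K :=
      calc (∏ i, X i ^ α i : MvPolynomial σ ℝ).totalDegree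
          ≤ ∑ i, (X i ^ α i : MvPolynomial σ ℝ).totalDegree := totalDegree_finsetProd _ _
        _ = ∑ i, α i := by simp only [totalDegree_X_pow]
        _ < K := hα
    simpa only [map_prod, map_pow, eval_X] using h _ hdeg
  · intro h q hq
    simp_rw [eval_eq', mul_sum]
    rw [sum_comm]
    refine sum_eq_zero fun β hβ => ?_
    have hβdeg : ∑ i, β i < K := by
      rw [← Finsupp.sum_fintype β (fun _ e => e) fun _ => rfl]
      exact (le_totalDegree hβ).trans_lt hq
    simp_rw [mul_left_comm (f _), ← mul_sum, h β hβdeg, mul_zero]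

end Orthogonality

section PureHighDegree

variable {ι : Type*} [Fintype ι] [DecidableEq ι]

def HasPureHighDegree (Ψ : (ι → ℝ) → ℝ) (D : ℕ) : Prop :=
  ∀ Q : MvPolynomial ι ℝ, Q.totalDegree < D → ∑ z ∈ boolCube ι, Ψ z * eval z Q = 0

variable {Ψ : (ι → ℝ) → ℝ} {D : ℕ}

theorem HasPureHighDegree.sum_mul_monomial_eq_zero (hΨ : HasPureHighDegree Ψ D) (α : ι → ℕ)
    (hα : ∑ i, α i < D) : ∑ z ∈ boolCube ι, Ψ z * ∏ i, z i ^ α i = 0 :=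
  (sum_mul_eval_eq_zero_iff_monomial _ Ψ (fun z => z) D).mp hΨ α hα

theorem HasPureHighDegree.sum_mul_prod_eq_zero (hΨ : HasPureHighDegree Ψ D) (T : Finset ι)
    (hT : #T < D) : ∑ z ∈ boolCube ι, Ψ z * ∏ i ∈ T, z i = 0 := by
  have h := hΨ.sum_mul_monomial_eq_zero (fun i => if i ∈ T then 1 else 0)
    (by rwa [sum_boole, Nat.cast_id, filter_mem_eq_inter, univ_inter])
  simpa only [pow_ite, pow_one, pow_zero, Fintype.prod_ite_mem] using h

theorem HasPureHighDegree.sum_mul_prod_add_mul_eq_zero (hΨ : HasPureHighDegree Ψ D)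
    (a b : ι → ℝ) (hb : #{i | b i ≠ 0} < D) :
    ∑ w ∈ boolCube ι, Ψ w * ∏ i, (w i * b i + a i) = 0 := by
  simp_rw [prod_add, mul_sum]
  rw [sum_comm]
  refine sum_eq_zero fun T _ => ?_
  by_cases hTb : ∀ i ∈ T, b i ≠ 0
  · have hT : #T < D := (card_le_card fun i hi => by simpa using hTb i hi).trans_lt hb
    simp_rw [prod_mul_distrib]
    calc ∑ w ∈ boolCube ι, Ψ w * ((∏ i ∈ T, w i) * (∏ i ∈ T, b i) * ∏ i ∈ univ \ T, a i)
        = (∑ w ∈ boolCube ι, Ψ w * ∏ i ∈ T, w i) * ((∏ i ∈ T, b i) * ∏ i ∈ univ \ T, a i) := by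
          rw [sum_mul]; exact sum_congr rfl fun _ _ => by ring
      _ = 0 := by rw [hΨ.sum_mul_prod_eq_zero T hT, zero_mul]
  · obtain ⟨i, hiT, hbi⟩ : ∃ i ∈ T, b i = 0 := by simpa using hTb
    refine sum_eq_zero fun w _ => ?_
    rw [prod_eq_zero hiT (by rw [hbi, mul_zero]), zero_mul, mul_zero]

noncomputable def dualBlockComp {κ : Type*} (Ψ : (ι → ℝ) → ℝ) (ψ : (κ → ℝ) → ℝ)
    (x : ι → κ → ℝ) : ℝ :=
  2 ^ Fintype.card ι * Ψ (fun i => pmSign (ψ (x i))) * ∏ i, |ψ (x i)|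

theorem HasPureHighDegree.sum_dualBlockComp_mul_monomial_eq_zero {κ : Type*} [Fintype κ]
    [DecidableEq κ] {ψ : (κ → ℝ) → ℝ} {d : ℕ} (hΨ : HasPureHighDegree Ψ D)
    (hψ : HasPureHighDegree ψ d) (α : ι → κ → ℕ) (hα : ∑ i, ∑ j, α i j < D * d) :
    ∑ x ∈ Fintype.piFinset (fun _ : ι => boolCube κ),
      dualBlockComp Ψ ψ x * ∏ i, ∏ j, x i j ^ α i j = 0 := by
  set A : ι → ℝ := fun i => ∑ y ∈ boolCube κ, |ψ y| * ∏ j, y j ^ α i j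
  set B : ι → ℝ := fun i => ∑ y ∈ boolCube κ, ψ y * ∏ j, y j ^ α i j
  have hB : #{i | B i ≠ 0} < D := by
    refine (card_le_card fun i hi => ?_).trans_lt (card_filter_le_lt_of_sum_lt_mul hα)
    simp only [mem_filter, mem_univ, true_and] at hi ⊢
    by_contra! h
    exact hi (hψ.sum_mul_monomial_eq_zero _ h)
  have hexpand : ∀ x ∈ Fintype.piFinset (fun _ : ι => boolCube κ),
      dualBlockComp Ψ ψ x * ∏ i, ∏ j, x i j ^ α i j =
        ∑ w ∈ boolCube ι, Ψ w *
          ∏ i, (1 + w i * pmSign (ψ (x i))) * (|ψ (x i)| * ∏ j, x i j ^ α i j) := by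
    intro x _
    rw [dualBlockComp, two_pow_card_mul_eq_sum Ψ (Fintype.mem_piFinset.mpr fun i => pmSign_mem _),
      sum_mul, sum_mul]
    refine sum_congr rfl fun w _ => ?_
    simp only [prod_mul_distrib]
    ring
  have hblock : ∀ (w : ι → ℝ) i,
      ∑ y ∈ boolCube κ, (1 + w i * pmSign (ψ y)) * (|ψ y| * ∏ j, y j ^ α i j) =
        w i * B i + A i := by
    intro w i
    simp only [B, A, mul_sum, ← sum_add_distrib]
    refine sum_congr rfl fun y _ => ?_
    linear_combination (w i * ∏ j, y j ^ α i j) * pmSign_mul_abs (ψ y)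
  calc _ = ∑ x ∈ Fintype.piFinset (fun _ : ι => boolCube κ), ∑ w ∈ boolCube ι, Ψ w *
          ∏ i, (1 + w i * pmSign (ψ (x i))) * (|ψ (x i)| * ∏ j, x i j ^ α i j) :=
        sum_congr rfl hexpand
    _ = ∑ w ∈ boolCube ι, Ψ w * ∏ i, ∑ y ∈ boolCube κ,
          (1 + w i * pmSign (ψ y)) * (|ψ y| * ∏ j, y j ^ α i j) := by
        rw [sum_comm]
        simp_rw [prod_univ_sum, mul_sum]
    _ = ∑ w ∈ boolCube ι, Ψ w * ∏ i, (w i * B i + A i) := by simp_rw [hblock]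
    _ = 0 := hΨ.sum_mul_prod_add_mul_eq_zero A B hB

end PureHighDegree

theorem dual_block_composition_phd_general (M m D d : ℕ)
    (Ψ : (Fin M → ℝ) → ℝ) (ψ : (Fin m → ℝ) → ℝ)
    (hΨ : ∀ Q : MvPolynomial (Fin M) ℝ, Q.totalDegree < D →
      ∑ z ∈ Fintype.piFinset (fun _ : Fin M => ({-1, 1} : Finset ℝ)),
        Ψ z * MvPolynomial.eval z Q = 0)
    (hψ : ∀ q : MvPolynomial (Fin m) ℝ, q.totalDegree < d →
      ∑ y ∈ Fintype.piFinset (fun _ : Fin m => ({-1, 1} : Finset ℝ)),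
        ψ y * MvPolynomial.eval y q = 0) :
    ∀ q : MvPolynomial (Fin M × Fin m) ℝ, q.totalDegree < D * d →
      ∑ x ∈ Fintype.piFinset
          (fun _ : Fin M => Fintype.piFinset (fun _ : Fin m => ({-1, 1} : Finset ℝ))),
        ((2 : ℝ) ^ M * Ψ (fun i => if 0 ≤ ψ (x i) then 1 else -1) * ∏ i, |ψ (x i)|) *
          MvPolynomial.eval (fun ij => x ij.1 ij.2) q = 0 := by
  refine (sum_mul_eval_eq_zero_iff_monomial _
    (fun x : Fin M → Fin m → ℝ =>
      2 ^ M * Ψ (fun i => if 0 ≤ ψ (x i) then 1 else -1) * ∏ i, |ψ (x i)|)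
    (fun x (ij : Fin M × Fin m) => x ij.1 ij.2) (D * d)).mpr fun α hα => ?_
  have h := HasPureHighDegree.sum_dualBlockComp_mul_monomial_eq_zero hΨ hψ (fun i j => α (i, j))
    (by rwa [← Fintype.sum_prod_type])
  simpa only [dualBlockComp, pmSign, Fintype.card_fin, Fintype.prod_prod_type] using h

theorem dual_block_composition_phd (M m D d : ℕ) (hd : 1 ≤ d)
    (Ψ : (Fin M → ℝ) → ℝ) (ψ : (Fin m → ℝ) → ℝ)
    (hΨ : ∀ Q : MvPolynomial (Fin M) ℝ, Q.totalDegree < D →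
      ∑ z ∈ Fintype.piFinset (fun _ : Fin M => ({-1, 1} : Finset ℝ)),
        Ψ z * MvPolynomial.eval z Q = 0)
    (hψ : ∀ q : MvPolynomial (Fin m) ℝ, q.totalDegree < d →
      ∑ y ∈ Fintype.piFinset (fun _ : Fin m => ({-1, 1} : Finset ℝ)),
        ψ y * MvPolynomial.eval y q = 0) :
    ∀ q : MvPolynomial (Fin M × Fin m) ℝ, q.totalDegree < D * d →
      ∑ x ∈ Fintype.piFinset
          (fun _ : Fin M => Fintype.piFinset (fun _ : Fin m => ({-1, 1} : Finset ℝ))),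
        ((2 : ℝ) ^ M * Ψ (fun i => if 0 ≤ ψ (x i) then 1 else -1) * ∏ i, |ψ (x i)|) *
          MvPolynomial.eval (fun ij => x ij.1 ij.2) q = 0 :=
  dual_block_composition_phd_general M m D d Ψ ψ hΨ hψ
end

section
/- Let p : {-1,1}^n → ℝ be a polynomial. Then there is a univariate polynomial q of degree at most deg(p) such that for every t ∈ {0,1,...,n}, q(t) equals the average of p over all inputs x ∈ {-1,1}^n of Hamming weight t, i.e. q(t) = C(n,t)^{-1} · ∑_{|x|=t} p(x). -/
/-!
Let `T` be the set of coordinates where a sign vector `x` equals `-1`, so `x i = 1 - 2 [i ∈ T]`.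
Since `x i ^ 2 = 1`, a monomial of `p` evaluates to the parity `∏ i ∈ S, x i` over its
coordinates `S` of odd exponent, and `|S|` is at most the degree of the monomial. Expanding,
`∏ i ∈ S, x i = ∑ A ⊆ S, (-2) ^ |A| [A ⊆ T]`. A uniformly random `t`-subset `T` of an `n`-set
contains a fixed `a`-set with probability `t^(a) / n^(a)` (falling factorials), which is a
polynomial of degree `a` in `t`. So the average of the parity over weight `t` is a polynomial
in `t` of degree at most `|S|`, and the theorem follows by linearity.
-/

open Finset Polynomial

theorem card_filter_powersetCard_subset_mul_descFactorial {α : Type*} [DecidableEq α]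
    {s t : Finset α} (hst : s ⊆ t) (n : ℕ) :
    #{u ∈ t.powersetCard n | s ⊆ u} * (#t).descFactorial #s =
      (#t).choose n * n.descFactorial #s := by
  rcases le_or_gt #s n with hsn | hsn
  · rw [card_filter_powersetCard_subset s t n hst hsn, Nat.descFactorial_eq_factorial_mul_choose,
      Nat.descFactorial_eq_factorial_mul_choose]
    linear_combination (#s).factorial * (Nat.choose_mul (n := #t) hsn).symm
  · have : #{u ∈ t.powersetCard n | s ⊆ u} = 0 := by
      refine card_eq_zero.2 (filter_eq_empty_iff.2 fun u hu hsu => ?_)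
      exact hsn.not_ge ((card_le_card hsu).trans_eq (mem_powersetCard.1 hu).2)
    rw [this, Nat.descFactorial_eq_zero_iff_lt.2 hsn, zero_mul, mul_zero]

noncomputable def symmetrizedParity (n k : ℕ) : ℝ[X] :=
  ∑ a ∈ range (k + 1), (k.choose a * (-2) ^ a / n.descFactorial a : ℝ) • descPochhammer ℝ a

theorem symmetrizedParity_mem_degreeLE (n k : ℕ) : symmetrizedParity n k ∈ degreeLE ℝ k := by
  refine Submodule.sum_mem _ fun a ha => Submodule.smul_mem _ _ ?_
  rw [mem_degreeLE]
  exact (degree_le_of_natDegree_le (descPochhammer_natDegree ℝ a).le).trans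
    (by exact_mod_cast Nat.lt_succ_iff.1 (mem_range.1 ha))

def oddSupport {ι : Type*} (d : ι →₀ ℕ) : Finset ι := {i ∈ d.support | Odd (d i)}

theorem card_oddSupport_le_totalDegree {ι : Type*} {p : MvPolynomial ι ℝ} {d : ι →₀ ℕ}
    (hd : d ∈ p.support) : #(oddSupport d) ≤ p.totalDegree :=
  calc #(oddSupport d) = ∑ _i ∈ oddSupport d, 1 := card_eq_sum_ones _
    _ ≤ ∑ i ∈ oddSupport d, d i := sum_le_sum fun _ hi => (mem_filter.1 hi).2.pos
    _ ≤ ∑ i ∈ d.support, d i := sum_le_sum_of_subset (filter_subset _ _)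
    _ ≤ p.totalDegree := MvPolynomial.le_totalDegree hd

theorem prod_pow_eq_prod_oddSupport {ι R : Type*} [CommMonoid R] {x : ι → R}
    (hx : ∀ i, x i ^ 2 = 1) (d : ι →₀ ℕ) :
    ∏ i ∈ d.support, x i ^ d i = ∏ i ∈ oddSupport d, x i := by
  rw [oddSupport, prod_filter]
  refine prod_congr rfl fun i _ => ?_
  obtain ⟨m, hm | hm⟩ := Nat.even_or_odd' (d i) <;> simp [hm, pow_add, pow_mul, hx]

section SignVectors

variable {ι : Type*} [Fintype ι] [DecidableEq ι]

def signVector (T : Finset ι) (i : ι) : ℝ := if i ∈ T then -1 else 1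

variable (ι) in
noncomputable def signVectorsOfWeight (t : ℕ) : Finset (ι → ℝ) :=
  {x ∈ Fintype.piFinset fun _ : ι => ({-1, 1} : Finset ℝ) | #{i | x i = -1} = t}

theorem filter_signVector_eq_neg_one (T : Finset ι) :
    ({i | signVector T i = -1} : Finset ι) = T := by
  ext i; by_cases h : i ∈ T <;> simp [signVector, h]; norm_num

theorem signVector_injective : Function.Injective (signVector (ι := ι)) := fun T T' h => by
  rw [← filter_signVector_eq_neg_one T, h, filter_signVector_eq_neg_one]

theorem signVectorsOfWeight_eq_map (t : ℕ) :
    signVectorsOfWeight ι t = (powersetCard t univ).map ⟨signVector, signVector_injective⟩ := by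
  ext x
  simp only [signVectorsOfWeight, mem_filter, Fintype.mem_piFinset, mem_insert, mem_singleton,
    mem_map, mem_powersetCard, subset_univ, true_and, Function.Embedding.coeFn_mk]
  constructor
  · rintro ⟨hx, rfl⟩
    refine ⟨_, rfl, funext fun i => ?_⟩
    rcases hx i with h | h <;> simp [signVector, h]; norm_num
  · rintro ⟨T, rfl, rfl⟩
    refine ⟨fun i => ?_, by rw [filter_signVector_eq_neg_one]⟩
    by_cases h : i ∈ T <;> simp [signVector, h]

theorem sq_eq_one_of_mem_signVectorsOfWeight {t : ℕ} {x : ι → ℝ}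
    (hx : x ∈ signVectorsOfWeight ι t) (i : ι) : x i ^ 2 = 1 := by
  have : x i = -1 ∨ x i = 1 := by simpa using Fintype.mem_piFinset.1 (mem_filter.1 hx).1 i
  rcases this with h | h <;> simp [h]

theorem prod_signVector (S T : Finset ι) :
    ∏ i ∈ S, signVector T i = ∑ A ∈ S.powerset, if A ⊆ T then (-2) ^ #A else 0 := by
  have h : ∀ i, signVector T i = 1 + if i ∈ T then -2 else 0 := fun i => by
    by_cases hi : i ∈ T <;> simp [signVector, hi]; norm_num
  simp only [h, prod_one_add, prod_ite_zero, prod_const]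
  exact sum_congr rfl fun A _ => if_congr subset_iff.symm rfl rfl

theorem div_choose_card_filter_subset {A : Finset ι} {t : ℕ} (ht : t ≤ Fintype.card ι) :
    (#{T ∈ powersetCard t univ | A ⊆ T} / (Fintype.card ι).choose t : ℝ) =
      t.descFactorial #A / (Fintype.card ι).descFactorial #A := by
  have hchoose : ((Fintype.card ι).choose t : ℝ) ≠ 0 := by positivity [Nat.choose_pos ht]
  have hdesc : ((Fintype.card ι).descFactorial #A : ℝ) ≠ 0 := by
    exact_mod_cast (Nat.descFactorial_pos.2 (card_le_univ A)).ne'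
  have hcount := card_filter_powersetCard_subset_mul_descFactorial (subset_univ A) t
  rw [card_univ] at hcount
  rw [div_eq_div_iff hchoose hdesc, mul_comm (t.descFactorial #A : ℝ)]
  exact_mod_cast hcount

theorem eval_symmetrizedParity (S : Finset ι) {t : ℕ} (ht : t ≤ Fintype.card ι) :
    (symmetrizedParity (Fintype.card ι) #S).eval (t : ℝ) =
      ((Fintype.card ι).choose t : ℝ)⁻¹ * ∑ x ∈ signVectorsOfWeight ι t, ∏ i ∈ S, x i := by
  set n := Fintype.card ι
  calc (symmetrizedParity n #S).eval (t : ℝ)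
      = ∑ A ∈ S.powerset, (-2) ^ #A * (t.descFactorial #A / n.descFactorial #A : ℝ) := by
        rw [sum_powerset_apply_card
          (fun a => (-2) ^ a * (t.descFactorial a / n.descFactorial a : ℝ)),
          symmetrizedParity, eval_finsetSum]
        refine sum_congr rfl fun a _ => ?_
        rw [eval_smul, descPochhammer_eval_eq_descFactorial, nsmul_eq_mul, smul_eq_mul]
        ring
    _ = ∑ A ∈ S.powerset, (-2) ^ #A * (#{T ∈ powersetCard t univ | A ⊆ T} / n.choose t : ℝ) := by
        refine sum_congr rfl fun A _ => by rw [div_choose_card_filter_subset ht]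
    _ = (n.choose t : ℝ)⁻¹ * ∑ A ∈ S.powerset,
          ∑ T ∈ powersetCard t univ, if A ⊆ T then (-2) ^ #A else 0 := by
        rw [mul_sum]
        refine sum_congr rfl fun A _ => ?_
        rw [← sum_filter, sum_const, nsmul_eq_mul]
        ring
    _ = (n.choose t : ℝ)⁻¹ * ∑ T ∈ powersetCard t univ, ∏ i ∈ S, signVector T i := by
        rw [sum_comm]
        simp only [prod_signVector]
    _ = _ := by rw [signVectorsOfWeight_eq_map, sum_map]; rfl

end SignVectors

theorem minsky_papert_symmetrization (n : ℕ) (p : MvPolynomial (Fin n) ℝ) :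
    ∃ q : Polynomial ℝ, q.degree ≤ p.totalDegree ∧
      ∀ t : ℕ, t ≤ n →
        q.eval (t : ℝ) = ((n.choose t : ℝ))⁻¹ *
          ∑ x ∈ (Fintype.piFinset fun _ : Fin n => ({-1, 1} : Finset ℝ)).filter
              (fun x => (Finset.univ.filter fun i => x i = -1).card = t),
            MvPolynomial.eval x p := by
  refine ⟨∑ d ∈ p.support, p.coeff d • symmetrizedParity n #(oddSupport d), ?_, fun t ht => ?_⟩
  · rw [← mem_degreeLE]
    exact Submodule.sum_mem _ fun d hd => Submodule.smul_mem _ _ <|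
      degreeLE_mono (by exact_mod_cast card_oddSupport_le_totalDegree hd)
        (symmetrizedParity_mem_degreeLE n _)
  · have heval : ∀ x ∈ signVectorsOfWeight (Fin n) t,
        MvPolynomial.eval x p = ∑ d ∈ p.support, p.coeff d * ∏ i ∈ oddSupport d, x i := by
      intro x hx
      simp only [MvPolynomial.eval_eq,
        prod_pow_eq_prod_oddSupport (sq_eq_one_of_mem_signVectorsOfWeight hx)]
    have hparity := fun d => eval_symmetrizedParity (ι := Fin n) (oddSupport d) (by simpa using ht)
    simp only [Fintype.card_fin] at hparity
    change _ = _ * ∑ x ∈ signVectorsOfWeight (Fin n) t, _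
    simp only [eval_finsetSum, eval_smul, hparity, sum_congr rfl heval, smul_eq_mul, mul_sum]
    rw [sum_comm]
    exact sum_congr rfl fun d _ => sum_congr rfl fun x _ => by ring
end
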